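/- For every Hessenberg function h, the generalized Tanisaki ideal I_h equals the Hessenberg basis ideal J_h: ⟨ e_{h_i - r}(x_1,...,x_{h_i}) : 1 ≤ i ≤ n, 0 ≤ r ≤ i-1 ⟩ = ⟨ ẽ_{β_i}(x_i,...,x_n) : 1 ≤ i ≤ n ⟩, where β_i = i - #{k : h_k < i}. -/

import Mathlib

/-!
Write `E_d(S)`, `H_d(S)` for the elementary and complete homogeneous symmetric polynomials in
the variables indexed by `S`. Coefficientwise, `E(T, -t) H(S, t) = H(S ∖ T, t)` for `T ⊆ S` and
`E(S, -t) H(U, t) = E(S ∖ U, -t)` for `U ⊆ S`. Hence, modulo any ideal containing all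
`E_k(x_1, …, x_n)` (equivalently all `H_k(x_1, …, x_n)`) with `k ≥ 1`, the polynomial
`e_d(x_1, …, x_m)` agrees up to sign with `ẽ_d(x_{m+1}, …, x_n)` for `d ≥ 1`. Both ideals contain these
symmetric polynomials: take `m = n` and `i = 1` in the next paragraph.

With `c(m) = #{k : h_k ≤ m}`, the recursions `E_{d+1}(S ∪ x) = E_{d+1}(S) + x E_d(S)` and
`H_{d+1}(S ∪ x) = H_{d+1}(S) + x H_d(S ∪ x)` show that `I_h` contains `e_d(x_1, …, x_m)` for
`d > m - c(m)` (induction on `m`), and `J_h` contains `ẽ_d(x_i, …, x_n)` for `d ≥ β_i` (downward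
induction on `i`). Since `c(h_i) ≥ i` and `β_{m+1} = m + 1 - c(m)`, each generator of one ideal
is, up to sign and the symmetric polynomials, one of these elements of the other.
-/
open MvPolynomial

/-- The index set of variables `x_a, x_{a+1}, ..., x_b` (1-indexed) among `x_1, ..., x_n`. -/
def seg (n a b : ℕ) : Finset (Fin n) :=
  Finset.univ.filter fun i => a ≤ (i : ℕ) + 1 ∧ (i : ℕ) + 1 ≤ b

/-- Truncated elementary symmetric polynomial of degree `d` in the variables indexed by `S`. -/
noncomputable def ee (n : ℕ) (d : ℤ) (S : Finset (Fin n)) : MvPolynomial (Fin n) ℤ :=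
  if 0 ≤ d then ∑ A ∈ S.powersetCard d.toNat, ∏ i ∈ A, X i else 0

/-- Truncated complete homogeneous symmetric polynomial of degree `d` in variables indexed by `S`. -/
noncomputable def te (n : ℕ) (d : ℤ) (S : Finset (Fin n)) : MvPolynomial (Fin n) ℤ :=
  if 0 ≤ d then ∑ m ∈ S.sym d.toNat, ((m : Multiset (Fin n)).map X).prod else 0

open Finset

section SymmetricOn

variable {σ R : Type*} [CommSemiring R] (f : σ → R)

noncomputable def esymmOn (S : Finset σ) (d : ℕ) : R := ∑ t ∈ S.powersetCard d, ∏ i ∈ t, f i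

@[simp] lemma esymmOn_zero (S : Finset σ) : esymmOn f S 0 = 1 := by simp [esymmOn]

lemma esymmOn_eq_zero_of_card_lt {S : Finset σ} {d : ℕ} (hd : #S < d) : esymmOn f S d = 0 := by
  simp [esymmOn, powersetCard_eq_empty.2 hd]

@[simp] lemma esymmOn_empty_succ (d : ℕ) : esymmOn f ∅ (d + 1) = 0 :=
  esymmOn_eq_zero_of_card_lt f (by simp)

variable [DecidableEq σ]

noncomputable def hsymmOn (S : Finset σ) (d : ℕ) : R := ∑ m ∈ S.sym d, (m.1.map f).prod

@[simp] lemma hsymmOn_zero (S : Finset σ) : hsymmOn f S 0 = 1 := by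
  rw [hsymmOn, sym_zero, sum_singleton]
  rfl

@[simp] lemma hsymmOn_empty_succ (d : ℕ) : hsymmOn f ∅ (d + 1) = 0 := by
  simp [hsymmOn]

lemma esymmOn_insert_succ {x : σ} {S : Finset σ} (hx : x ∉ S) (d : ℕ) :
    esymmOn f (insert x S) (d + 1) = esymmOn f S (d + 1) + f x * esymmOn f S d := by
  simp only [esymmOn, ← esymm_map_val, insert_val_of_notMem hx, Multiset.map_cons,
    Multiset.esymm, Multiset.powersetCard_cons, Multiset.map_add, Multiset.sum_add,
    Multiset.map_map, Function.comp_def, Multiset.prod_cons, Multiset.sum_map_mul_left]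

lemma hsymmOn_insert_succ {x : σ} {S : Finset σ} (hx : x ∉ S) (d : ℕ) :
    hsymmOn f (insert x S) (d + 1) = hsymmOn f S (d + 1) + f x * hsymmOn f (insert x S) d := by
  have hfree : {m ∈ (insert x S).sym (d + 1) | x ∉ m} = S.sym (d + 1) := by
    ext m
    simp only [mem_filter, mem_sym_iff, mem_insert]
    exact ⟨fun ⟨hm, hxm⟩ a ha => (hm a ha).resolve_left (by rintro rfl; exact hxm ha),
      fun hm => ⟨fun a ha => Or.inr (hm a ha), fun hxm => hx (hm x hxm)⟩⟩
  have hcons : {m ∈ (insert x S).sym (d + 1) | x ∈ m} = ((insert x S).sym d).map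
      ⟨Sym.cons x, fun _ _ => (Sym.cons_inj_right x _ _).1⟩ := by
    ext m
    simp only [mem_filter, mem_map]
    constructor
    · rintro ⟨hm, hxm⟩
      refine ⟨m.erase x hxm, mem_sym_iff.2 fun a ha => mem_sym_iff.1 hm a ?_, Sym.cons_erase hxm⟩
      exact Multiset.mem_of_mem_erase ha
    · rintro ⟨m, hm, rfl⟩
      refine ⟨mem_sym_iff.2 fun a ha => ?_, Sym.mem_cons_self x m⟩
      rcases Sym.mem_cons.1 ha with rfl | ha
      · exact mem_insert_self a S
      · exact mem_sym_iff.1 hm a ha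
  rw [hsymmOn, ← sum_filter_not_add_sum_filter _ (fun m => x ∈ m), hfree, hcons, sum_map,
    hsymmOn, hsymmOn, mul_sum]
  congr 1
  refine sum_congr rfl fun m _ => ?_
  change (Multiset.map f (x ::ₘ m.1)).prod = _
  rw [Multiset.map_cons, Multiset.prod_cons]

end SymmetricOn

section Alternating

variable {σ R : Type*} [CommRing R] [DecidableEq σ] (f : σ → R)

-- the coefficient of `t ^ d` in `E(T, -t) H(S, t)`
noncomputable def altConv (T S : Finset σ) (d : ℕ) : R :=
  ∑ p ∈ antidiagonal d, (-1) ^ p.1 * esymmOn f T p.1 * hsymmOn f S p.2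

@[simp] lemma altConv_zero (T S : Finset σ) : altConv f T S 0 = 1 := by simp [altConv]

lemma altConv_succ (T S : Finset σ) (d : ℕ) :
    altConv f T S (d + 1) = hsymmOn f S (d + 1) +
      ∑ p ∈ antidiagonal d, (-1) ^ (p.1 + 1) * esymmOn f T (p.1 + 1) * hsymmOn f S p.2 := by
  simp [altConv, Nat.sum_antidiagonal_succ]

lemma altConv_succ' (T S : Finset σ) (d : ℕ) :
    altConv f T S (d + 1) = (-1) ^ (d + 1) * esymmOn f T (d + 1) +
      ∑ p ∈ antidiagonal d, (-1) ^ p.1 * esymmOn f T p.1 * hsymmOn f S (p.2 + 1) := by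
  simp [altConv, Nat.sum_antidiagonal_succ']

lemma altConv_insert_left {x : σ} {T : Finset σ} (hx : x ∉ T) (S : Finset σ) (d : ℕ) :
    altConv f (insert x T) S (d + 1) = altConv f T S (d + 1) - f x * altConv f T S d := by
  rw [altConv_succ f (insert x T), altConv_succ f T, altConv, mul_sum]
  simp only [esymmOn_insert_succ f hx]
  rw [add_sub_assoc, ← sum_sub_distrib]
  congr 1
  refine sum_congr rfl fun p _ => ?_
  ring

lemma altConv_insert_right {x : σ} {U : Finset σ} (hx : x ∉ U) (T : Finset σ) (d : ℕ) :
    altConv f T (insert x U) (d + 1) =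
      altConv f T U (d + 1) + f x * altConv f T (insert x U) d := by
  rw [altConv_succ' f T (insert x U), altConv_succ' f T U, altConv, mul_sum]
  simp only [hsymmOn_insert_succ f hx]
  rw [add_assoc, ← sum_add_distrib]
  congr 1
  refine sum_congr rfl fun p _ => ?_
  ring

theorem altConv_of_subset {T S : Finset σ} (hTS : T ⊆ S) (d : ℕ) :
    altConv f T S d = hsymmOn f (S \ T) d := by
  induction T using Finset.induction_on generalizing d with
  | empty => cases d <;> simp [altConv_succ]
  | insert x T hxT ih =>
    have hxS : x ∈ S := hTS (mem_insert_self x T)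
    have hTS' : T ⊆ S := (subset_insert x T).trans hTS
    cases d with
    | zero => simp
    | succ d =>
      rw [altConv_insert_left f hxT, ih hTS', ih hTS',
        ← sdiff_insert_insert_of_mem_of_notMem hxS hxT,
        hsymmOn_insert_succ f (notMem_sdiff_of_mem_right (mem_insert_self x T)),
        add_sub_cancel_right]

theorem altConv_of_superset {U S : Finset σ} (hUS : U ⊆ S) (d : ℕ) :
    altConv f S U d = (-1) ^ d * esymmOn f (S \ U) d := by
  induction U using Finset.induction_on generalizing d with
  | empty => cases d <;> simp [altConv_succ']
  | insert x U hxU ih =>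
    have hxS : x ∈ S := hUS (mem_insert_self x U)
    have hUS' : U ⊆ S := (subset_insert x U).trans hUS
    induction d with
    | zero => simp
    | succ d ihd =>
      rw [altConv_insert_right f hxU, ih hUS', ihd, ← sdiff_insert_insert_of_mem_of_notMem hxS hxU,
        esymmOn_insert_succ f (notMem_sdiff_of_mem_right (mem_insert_self x U))]
      ring

end Alternating

section IdealMembership

variable {σ R : Type*} [CommRing R] [DecidableEq σ] {f : σ → R} {I : Ideal R} {T S : Finset σ}

lemma esymmOn_succ_mem_iff_altConv_mem (hS : ∀ l, hsymmOn f S (l + 1) ∈ I) (d : ℕ) :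
    esymmOn f T (d + 1) ∈ I ↔ altConv f T S (d + 1) ∈ I := by
  rw [altConv_succ', add_mem_cancel_right (sum_mem fun p _ => I.mul_mem_left _ (hS p.2)),
    I.unit_mul_mem_iff_mem (isUnit_neg_one.pow _)]

lemma hsymmOn_succ_mem_iff_altConv_mem (hT : ∀ k, esymmOn f T (k + 1) ∈ I) (d : ℕ) :
    hsymmOn f S (d + 1) ∈ I ↔ altConv f T S (d + 1) ∈ I := by
  rw [altConv_succ, add_mem_cancel_right
    (sum_mem fun p _ => I.mul_mem_right _ (I.mul_mem_left _ (hT p.1)))]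

lemma esymmOn_succ_mem_of_hsymmOn_succ_mem (hS : ∀ l, hsymmOn f S (l + 1) ∈ I) (d : ℕ) :
    esymmOn f S (d + 1) ∈ I := by
  rw [esymmOn_succ_mem_iff_altConv_mem hS, altConv_of_subset f subset_rfl, Finset.sdiff_self,
    hsymmOn_empty_succ]
  exact I.zero_mem

lemma hsymmOn_succ_mem_of_esymmOn_succ_mem (hS : ∀ k, esymmOn f S (k + 1) ∈ I) (d : ℕ) :
    hsymmOn f S (d + 1) ∈ I := by
  rw [hsymmOn_succ_mem_iff_altConv_mem hS, altConv_of_subset f subset_rfl, Finset.sdiff_self,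
    hsymmOn_empty_succ]
  exact I.zero_mem

end IdealMembership

section Segments

variable {n : ℕ}

lemma seg_one_self : seg n 1 n = univ := by
  ext i
  simp [seg]

lemma seg_eq_empty {a : ℕ} (ha : n < a) : seg n a n = ∅ := by
  ext i
  simp only [seg, mem_filter, mem_univ, true_and, notMem_empty, iff_false]
  omega

lemma univ_sdiff_seg_one (m : ℕ) : univ \ seg n 1 m = seg n (m + 1) n := by
  ext i
  simp only [seg, mem_sdiff, mem_univ, mem_filter, true_and]
  omega

lemma univ_sdiff_seg_succ (m : ℕ) : univ \ seg n (m + 1) n = seg n 1 m := by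
  ext i
  simp only [seg, mem_sdiff, mem_univ, mem_filter, true_and]
  omega

lemma seg_one_succ {m : ℕ} (hm : m < n) : seg n 1 (m + 1) = insert ⟨m, hm⟩ (seg n 1 m) := by
  ext i
  simp only [seg, mem_insert, mem_filter, mem_univ, true_and, Fin.ext_iff]
  omega

lemma mk_notMem_seg_one {m : ℕ} (hm : m < n) : (⟨m, hm⟩ : Fin n) ∉ seg n 1 m := by
  simp [seg]

lemma seg_succ_eq_insert {j : ℕ} (hj : j < n) :
    seg n (j + 1) n = insert ⟨j, hj⟩ (seg n (j + 1 + 1) n) := by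
  ext i
  simp only [seg, mem_insert, mem_filter, mem_univ, true_and, Fin.ext_iff]
  omega

lemma mk_notMem_seg_add_two {j : ℕ} (hj : j < n) : (⟨j, hj⟩ : Fin n) ∉ seg n (j + 1 + 1) n := by
  simp [seg]

lemma card_seg_one_le (m : ℕ) : #(seg n 1 m) ≤ m := by
  simpa using card_le_card_of_injOn (t := range m) Fin.val
    (fun i hi => by simp only [seg, coe_filter, Set.mem_ofPred_eq] at hi; simp; omega)
    Fin.val_injective.injOn

end Segments

section HessenbergCount

variable {n : ℕ} {h : Fin n → ℕ}

def countLE (h : Fin n → ℕ) (m : ℕ) : ℕ := #{k | h k ≤ m}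

lemma countLE_mono : Monotone (countLE h) := fun _ _ hab =>
  card_le_card (monotone_filter_right _ fun _ _ hk => hk.trans hab)

lemma countLE_le_card (m : ℕ) : countLE h m ≤ n :=
  (card_filter_le _ _).trans_eq (card_fin n)

lemma countLE_eq_card {m : ℕ} (hm : ∀ k, h k ≤ m) : countLE h m = n := by
  simp [countLE, hm]

lemma countLE_le (hlow : ∀ i : Fin n, (i : ℕ) + 1 ≤ h i) (m : ℕ) : countLE h m ≤ m :=
  (card_le_card (monotone_filter_right _ fun k _ hk => by have := hlow k; omega)).trans
    (card_seg_one_le (n := n) m)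

lemma lt_countLE_iff (hmono : Monotone h) (k : Fin n) (m : ℕ) :
    (k : ℕ) < countLE h m ↔ h k ≤ m := by
  constructor
  · intro hk
    by_contra! hkm
    have hsub : ({k' | h k' ≤ m} : Finset (Fin n)) ⊆ Iio k := fun k' hk' => by
      simp only [mem_filter, mem_univ, true_and] at hk'
      exact mem_Iio.2 (lt_of_not_ge fun hle => by have := hmono hle; omega)
    have := (card_le_card hsub).trans_eq (Fin.card_Iio k)
    rw [countLE] at hk
    omega
  · intro hkm
    have hsub : Iic k ⊆ ({k' | h k' ≤ m} : Finset (Fin n)) := fun k' hk' =>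
      mem_filter.2 ⟨mem_univ _, (hmono (mem_Iic.1 hk')).trans hkm⟩
    have := (Fin.card_Iic k).symm.trans_le (card_le_card hsub)
    rw [countLE]
    omega

end HessenbergCount

section HessenbergIdeals

variable {n : ℕ} {R : Type*} [CommSemiring R] (f : Fin n → R) {h : Fin n → ℕ}

def tanisakiIdeal (h : Fin n → ℕ) : Ideal R :=
  Ideal.span {p | ∃ (i : Fin n) (r : ℕ), r ≤ i ∧ p = esymmOn f (seg n 1 (h i)) (h i - r)}

-- with `j : Fin n` counted from `0`, the degree `j + 1 - countLE h j` is the paper's `β_{j+1}`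
def hessenbergBasisIdeal (h : Fin n → ℕ) : Ideal R :=
  Ideal.span (Set.range fun j : Fin n => hsymmOn f (seg n (j + 1) n) (j + 1 - countLE h j))

lemma hsymmOn_seg_mem_hessenbergBasisIdeal_of_lt {j : ℕ} (hj : j < n) :
    ∀ d, j + 1 - countLE h j ≤ d → hsymmOn f (seg n (j + 1) n) d ∈ hessenbergBasisIdeal f h := by
  refine Nat.decreasingInduction (motive := fun j _ => j < n →
      ∀ d, j + 1 - countLE h j ≤ d → hsymmOn f (seg n (j + 1) n) d ∈ hessenbergBasisIdeal f h)
    (fun j hjn ih _ d hd => ?_) (fun hn => absurd hn (lt_irrefl n)) hj.le hj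
  induction d, hd using Nat.le_induction with
  | base => exact Ideal.subset_span ⟨⟨j, hjn⟩, rfl⟩
  | succ d hbd ihd =>
    rw [seg_succ_eq_insert hjn, hsymmOn_insert_succ f (mk_notMem_seg_add_two hjn),
      ← seg_succ_eq_insert hjn]
    refine add_mem ?_ (Ideal.mul_mem_left _ _ ihd)
    rcases lt_or_ge (j + 1) n with hj1 | hj1
    · have := countLE_mono (h := h) (Nat.le_add_right j 1)
      exact ih hj1 (d + 1) (by omega)
    · rw [seg_eq_empty (by omega), hsymmOn_empty_succ]
      exact zero_mem _

lemma hsymmOn_seg_mem_hessenbergBasisIdeal {j d : ℕ} (hd : j - countLE h j ≤ d) :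
    hsymmOn f (seg n (j + 1) n) (d + 1) ∈ hessenbergBasisIdeal f h := by
  rcases lt_or_ge j n with hj | hj
  · exact hsymmOn_seg_mem_hessenbergBasisIdeal_of_lt f hj _ (by omega)
  · rw [seg_eq_empty (by omega), hsymmOn_empty_succ]
    exact zero_mem _

lemma hsymmOn_univ_mem_hessenbergBasisIdeal (d : ℕ) :
    hsymmOn f univ (d + 1) ∈ hessenbergBasisIdeal f h := by
  simpa [seg_one_self] using hsymmOn_seg_mem_hessenbergBasisIdeal f (h := h) (j := 0) (d := d)
    (by simp)

lemma esymmOn_seg_one_mem_tanisakiIdeal (hmono : Monotone h)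
    (hlow : ∀ i : Fin n, (i : ℕ) + 1 ≤ h i) {m d : ℕ} (hm : m ≤ n) (hd : m - countLE h m ≤ d) :
    esymmOn f (seg n 1 m) (d + 1) ∈ tanisakiIdeal f h := by
  induction m generalizing d with
  | zero =>
    rw [esymmOn_eq_zero_of_card_lt f ((card_seg_one_le 0).trans_lt d.succ_pos)]
    exact zero_mem _
  | succ m ih =>
    have hmn : m < n := hm
    have hcm := countLE_le hlow m
    rcases (countLE_mono (h := h) (Nat.le_add_right m 1)).eq_or_lt with hc | hc
    · obtain ⟨e, rfl⟩ : ∃ e, d = e + 1 := ⟨d - 1, by omega⟩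
      rw [seg_one_succ hmn, esymmOn_insert_succ f (mk_notMem_seg_one hmn)]
      exact add_mem (ih hmn.le (by omega)) (Ideal.mul_mem_left _ _ (ih hmn.le (by omega)))
    · -- `k` is the last index with `h k ≤ m + 1`; since `countLE h` jumps at `m + 1`, `h k = m + 1`
      have hcn := countLE_le_card (h := h) (m + 1)
      set k : Fin n := ⟨countLE h (m + 1) - 1, by omega⟩
      have hk : h k = m + 1 := by
        have h1 := (lt_countLE_iff hmono k (m + 1)).1 (by simp only [k]; omega)
        have h2 := (lt_countLE_iff hmono k m).not.1 (by simp only [k]; omega)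
        omega
      rcases le_or_gt d m with hdm | hdm
      · refine Ideal.subset_span ⟨k, m - d, by simp only [k]; omega, ?_⟩
        rw [hk, show m + 1 - (m - d) = d + 1 by omega]
      · rw [esymmOn_eq_zero_of_card_lt f ((card_seg_one_le _).trans_lt (by omega))]
        exact zero_mem _

lemma esymmOn_univ_mem_tanisakiIdeal (hmono : Monotone h)
    (hlow : ∀ i : Fin n, (i : ℕ) + 1 ≤ h i) (hhigh : ∀ i, h i ≤ n) (d : ℕ) :
    esymmOn f univ (d + 1) ∈ tanisakiIdeal f h := by
  simpa [seg_one_self] using esymmOn_seg_one_mem_tanisakiIdeal f hmono hlow le_rfl (d := d)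
    (by rw [countLE_eq_card hhigh]; simp)

end HessenbergIdeals

section TanisakiEqBasis

variable {n : ℕ} {R : Type*} [CommRing R] (f : Fin n → R) {h : Fin n → ℕ}

lemma tanisakiIdeal_le_hessenbergBasisIdeal (hmono : Monotone h)
    (hlow : ∀ i : Fin n, (i : ℕ) + 1 ≤ h i) : tanisakiIdeal f h ≤ hessenbergBasisIdeal f h := by
  rw [tanisakiIdeal, Ideal.span_le]
  rintro _ ⟨i, r, hr, rfl⟩
  obtain ⟨d, hd⟩ : ∃ d, h i - r = d + 1 := ⟨h i - r - 1, by have := hlow i; omega⟩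
  have hi := (lt_countLE_iff hmono i (h i)).2 le_rfl
  rw [SetLike.mem_coe, hd, ← univ_sdiff_seg_succ,
    ← Ideal.unit_mul_mem_iff_mem _ (isUnit_neg_one.pow (d + 1)),
    ← altConv_of_superset f (subset_univ _), ← hsymmOn_succ_mem_iff_altConv_mem
      (esymmOn_succ_mem_of_hsymmOn_succ_mem (hsymmOn_univ_mem_hessenbergBasisIdeal f))]
  exact hsymmOn_seg_mem_hessenbergBasisIdeal f (by omega)

lemma hessenbergBasisIdeal_le_tanisakiIdeal (hmono : Monotone h)
    (hlow : ∀ i : Fin n, (i : ℕ) + 1 ≤ h i) (hhigh : ∀ i, h i ≤ n) :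
    hessenbergBasisIdeal f h ≤ tanisakiIdeal f h := by
  rw [hessenbergBasisIdeal, Ideal.span_le]
  rintro _ ⟨j, rfl⟩
  have hj := countLE_le hlow j
  dsimp only
  rw [SetLike.mem_coe, show j + 1 - countLE h j = j - countLE h j + 1 by omega,
    ← univ_sdiff_seg_one, ← altConv_of_subset f (subset_univ _), ← esymmOn_succ_mem_iff_altConv_mem
      (hsymmOn_succ_mem_of_esymmOn_succ_mem (esymmOn_univ_mem_tanisakiIdeal f hmono hlow hhigh))]
  exact esymmOn_seg_one_mem_tanisakiIdeal f hmono hlow j.isLt.le le_rfl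

theorem tanisakiIdeal_eq_hessenbergBasisIdeal (hmono : Monotone h)
    (hlow : ∀ i : Fin n, (i : ℕ) + 1 ≤ h i) (hhigh : ∀ i, h i ≤ n) :
    tanisakiIdeal f h = hessenbergBasisIdeal f h :=
  le_antisymm (tanisakiIdeal_le_hessenbergBasisIdeal f hmono hlow)
    (hessenbergBasisIdeal_le_tanisakiIdeal f hmono hlow hhigh)

end TanisakiEqBasis

lemma ee_natCast {n : ℕ} (d : ℕ) (S : Finset (Fin n)) : ee n d S = esymmOn X S d := by
  simp [ee, esymmOn]

lemma te_natCast {n : ℕ} (d : ℕ) (S : Finset (Fin n)) : te n d S = hsymmOn X S d := by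
  simp [te, hsymmOn]

theorem stmt18_general (n : ℕ) (h : Fin n → ℕ)
    (hh1 : ∀ i : Fin n, (i : ℕ) + 1 ≤ h i ∧ h i ≤ n)
    (hh2 : ∀ i j : Fin n, i ≤ j → h i ≤ h j)
    (β : Fin n → ℕ)
    (hβ : ∀ i : Fin n,
      β i = (i : ℕ) + 1 - (Finset.univ.filter fun k : Fin n => h k < (i : ℕ) + 1).card) :
    Ideal.span {p : MvPolynomial (Fin n) ℤ |
        ∃ i : Fin n, ∃ r : ℕ, r ≤ (i : ℕ) ∧ p = ee n ((h i : ℤ) - r) (seg n 1 (h i))} =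
      Ideal.span (Set.range fun j : Fin n => te n (β j) (seg n ((j : ℕ) + 1) n)) := by
  have hmono : Monotone h := fun i j hij => hh2 i j hij
  have hlow i := (hh1 i).1
  have htanisaki : {p : MvPolynomial (Fin n) ℤ |
      ∃ i : Fin n, ∃ r : ℕ, r ≤ (i : ℕ) ∧ p = ee n ((h i : ℤ) - r) (seg n 1 (h i))} =
      {p | ∃ (i : Fin n) (r : ℕ), r ≤ i ∧ p = esymmOn X (seg n 1 (h i)) (h i - r)} :=
    Set.ext fun p => exists_congr fun i => exists_congr fun r => and_congr_right fun hr => by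
      have := hlow i
      rw [← ee_natCast, Nat.cast_sub (by omega)]
  have hbasis : (fun j : Fin n => te n (β j) (seg n ((j : ℕ) + 1) n)) =
      fun j : Fin n => hsymmOn X (seg n (j + 1) n) (j + 1 - countLE h j) :=
    funext fun j => by simp [te_natCast, hβ j, countLE]
  rw [htanisaki, hbasis]
  exact tanisakiIdeal_eq_hessenbergBasisIdeal X hmono hlow fun i => (hh1 i).2

theorem stmt18 (n : ℕ) (hn : 0 < n) (h : Fin n → ℕ)
    (hh1 : ∀ i : Fin n, (i : ℕ) + 1 ≤ h i ∧ h i ≤ n)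
    (hh2 : ∀ i j : Fin n, i ≤ j → h i ≤ h j)
    (β : Fin n → ℕ)
    (hβ : ∀ i : Fin n,
      β i = (i : ℕ) + 1 - (Finset.univ.filter fun k : Fin n => h k < (i : ℕ) + 1).card) :
    Ideal.span {p : MvPolynomial (Fin n) ℤ |
        ∃ i : Fin n, ∃ r : ℕ, r ≤ (i : ℕ) ∧ p = ee n ((h i : ℤ) - r) (seg n 1 (h i))} =
      Ideal.span (Set.range fun j : Fin n => te n (β j) (seg n ((j : ℕ) + 1) n)) :=
  stmt18_general n h hh1 hh2 β hβ
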